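/- Let c_1,…,c_m be non-negative integers with D_m := ∏_{i=1}^m u_{c_i} ≠ 0, and set y_m := r_{c_1} + Σ_{k=2}^m r_{c_k} ∏_{i=1}^{k−1} u_{c_i}. If D_m > 0, then the supremum of f on the cylinder Δ^E_{c_1…c_m} equals y_m + D_m and is attained at the right endpoint Δ^E_{c_1…c_m(0)}, while the infimum equals y_m and is the value of f at the left endpoint Δ^E_{c_1…c_{m−1}[c_m+1](0)}. If D_m < 0, then the supremum equals y_m, attained at Δ^E_{c_1…c_{m−1}[c_m+1](0)}, and the infimum equals y_m + D_m, attained at Δ^E_{c_1…c_m(0)}. -/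

import Mathlib

/-!
Since `u n → 0` and `|u n| < 1`, the `|u n|` are bounded by some `M < 1`, so `fSeries`
converges absolutely for every digit sequence. With `φ j t = r j + u j * t` it satisfies
`fSeries g = φ (g 0) (fSeries (g ∘ succ))`, and every `φ j` maps `[0, 1]` into itself because
`φ j 0 = r j` and `φ j 1 = r (j - 1)` (with `r (-1) = 1`). The partial sums are the
compositions `φ (g 0) ∘ ⋯ ∘ φ (g (m - 1))` at `0`, so `fSeries g ∈ [0, 1]`, and on the
cylinder `f = y + D * t`, where `t ∈ [0, 1]` is `fSeries` of the shifted digits. The right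
endpoint has tail `0, 0, …`, i.e. `t = 1`; the points with tail `j, 0, 0, …` have
`t = r j + u j → 0`; and the left endpoint gives `y` because `r (c + 1) + u (c + 1) = r c`.
-/

open scoped BigOperators

/-- The value `Δ^E_g` of the Engel series with digit sequence `g`
(`g n` is the paper's `g_{n+1}`). -/
noncomputable def engelSum (g : ℕ → ℕ) : ℝ :=
  ∑' n : ℕ, ∏ k ∈ Finset.range (n + 1),
    ((2 : ℝ) + ∑ i ∈ Finset.range (k + 1), (g i : ℝ))⁻¹

/-- The value of the series `r_{g_1} + ∑_{k≥2} r_{g_k} ∏_{i=1}^{k-1} u_{g_i}`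
defining `f` on the digit sequence `g`. -/
noncomputable def fSeries (u r : ℕ → ℝ) (g : ℕ → ℕ) : ℝ :=
  r (g 0) + ∑' k : ℕ, r (g (k + 1)) * ∏ i ∈ Finset.range (k + 1), u (g i)

/-- `rpred r n = r (n-1)`, with the convention `r (-1) = 1`. -/
noncomputable def rpred (r : ℕ → ℝ) (n : ℕ) : ℝ := if n = 0 then 1 else r (n - 1)

open Finset Filter Topology

section IsLUB

variable {α : Type*} [TopologicalSpace α] [LinearOrder α] [OrderTopology α]
  {s : Set α} {a b : α}

theorem isGreatest_and_isGLB_of_subset_Icc (hs : s ⊆ Set.Icc a b) (hb : b ∈ s)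
    (ha : a ∈ closure s) : IsGreatest s b ∧ IsGLB s a :=
  ⟨⟨hb, fun _ hx => (hs hx).2⟩, isGLB_of_mem_closure (fun _ hx => (hs hx).1) ha⟩

theorem isLeast_and_isLUB_of_subset_Icc (hs : s ⊆ Set.Icc a b) (ha : a ∈ s)
    (hb : b ∈ closure s) : IsLeast s a ∧ IsLUB s b :=
  ⟨⟨ha, fun _ hx => (hs hx).1⟩, isLUB_of_mem_closure (fun _ hx => (hs hx).2) hb⟩

end IsLUB

theorem mem_uIcc_add_mul {y D t : ℝ} (ht : t ∈ Set.Icc (0 : ℝ) 1) :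
    y + D * t ∈ Set.uIcc y (y + D) := by
  rw [← segment_eq_uIcc]
  exact ⟨1 - t, t, by linarith [ht.2], ht.1, by ring, by simp only [smul_eq_mul]; ring⟩

theorem engelSum_mem_Ioc (g : ℕ → ℕ) : engelSum g ∈ Set.Ioc (0 : ℝ) 1 := by
  set a : ℕ → ℝ := fun n =>
    ∏ k ∈ range (n + 1), ((2 : ℝ) + ∑ i ∈ range (k + 1), (g i : ℝ))⁻¹
  have ha_pos (n : ℕ) : 0 < a n := by positivity
  have ha_le (n : ℕ) : a n ≤ 1 / 2 / 2 ^ n :=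
    calc a n ≤ ∏ _k ∈ range (n + 1), (2 : ℝ)⁻¹ :=
          prod_le_prod (fun k _ => by positivity) fun k _ =>
            inv_anti₀ two_pos (le_add_of_nonneg_right (by positivity))
      _ = 1 / 2 / 2 ^ n := by rw [prod_const, card_range, inv_pow, pow_succ]; field_simp
  have hgeom := hasSum_geometric_two' 1
  have hs : Summable a := hgeom.summable.of_nonneg_of_le (fun n => (ha_pos n).le) ha_le
  exact ⟨hs.tsum_pos (fun n => (ha_pos n).le) 0 (ha_pos 0),
    (hs.tsum_le_tsum ha_le hgeom.summable).trans hgeom.tsum_eq.le⟩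

theorem exists_forall_abs_le_lt_one {u : ℕ → ℝ} (hu : Tendsto u atTop (𝓝 0))
    (h : ∀ n, |u n| < 1) : ∃ M < 1, ∀ n, |u n| ≤ M := by
  obtain ⟨N, hN⟩ := eventually_atTop.1 (hu.abs.eventually_lt_const (u := 1 / 2) (by norm_num))
  obtain ⟨n₀, -, hn₀⟩ :=
    (range (N + 1)).exists_max_image (fun n => |u n|) nonempty_range_add_one
  refine ⟨max (1 / 2) |u n₀|, max_lt (by norm_num) (h n₀), fun n => ?_⟩
  rcases lt_or_ge n N with hn | hn
  · exact le_max_of_le_right (hn₀ n (mem_range.2 (by omega)))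
  · exact le_max_of_le_left (hN n hn).le

section fSeries

variable {u r : ℕ → ℝ}

noncomputable def fSeriesTerm (u r : ℕ → ℝ) (g : ℕ → ℕ) (k : ℕ) : ℝ :=
  r (g k) * ∏ i ∈ range k, u (g i)

theorem fSeriesTerm_add (g : ℕ → ℕ) (m k : ℕ) :
    fSeriesTerm u r g (k + m) =
      (∏ i ∈ range m, u (g i)) * fSeriesTerm u r (fun n => g (n + m)) k := by
  rw [fSeriesTerm, fSeriesTerm, add_comm k m, prod_range_add]
  simp only [add_comm m]
  ring

theorem summable_fSeriesTerm (hu : Tendsto u atTop (𝓝 0)) (hu1 : ∀ n, |u n| < 1)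
    (hr : ∀ n, |r n| ≤ 1) (g : ℕ → ℕ) : Summable (fSeriesTerm u r g) := by
  obtain ⟨M, hM, huM⟩ := exists_forall_abs_le_lt_one hu hu1
  have hM0 : 0 ≤ M := (abs_nonneg _).trans (huM 0)
  refine Summable.of_norm_bounded (summable_geometric_of_lt_one hM0 hM) fun k => ?_
  calc ‖fSeriesTerm u r g k‖ = |r (g k)| * ∏ i ∈ range k, |u (g i)| := by
        rw [fSeriesTerm, Real.norm_eq_abs, abs_mul, abs_prod]
    _ ≤ 1 * ∏ _i ∈ range k, M :=
        mul_le_mul (hr _) (prod_le_prod (fun _ _ => abs_nonneg _) fun _ _ => huM _)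
          (by positivity) zero_le_one
    _ = M ^ k := by rw [one_mul, prod_const, card_range]

theorem hasSum_fSeriesTerm {g : ℕ → ℕ} (hs : Summable (fSeriesTerm u r g)) :
    HasSum (fSeriesTerm u r g) (fSeries u r g) := by
  convert hs.hasSum using 1
  rw [hs.tsum_eq_zero_add, fSeries]
  simp [fSeriesTerm]

theorem fSeries_eq_sum_add_prod_mul (hs : ∀ g, Summable (fSeriesTerm u r g))
    (g : ℕ → ℕ) (m : ℕ) :
    fSeries u r g = ∑ k ∈ range m, fSeriesTerm u r g k +
      (∏ i ∈ range m, u (g i)) * fSeries u r (fun n => g (n + m)) := by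
  calc fSeries u r g = ∑' k, fSeriesTerm u r g k := (hasSum_fSeriesTerm (hs g)).tsum_eq.symm
    _ = ∑ k ∈ range m, fSeriesTerm u r g k + ∑' k, fSeriesTerm u r g (k + m) :=
        ((hs g).sum_add_tsum_nat_add m).symm
    _ = _ := by simp only [fSeriesTerm_add, tsum_mul_left, (hasSum_fSeriesTerm (hs _)).tsum_eq]

theorem fSeries_eq_of_eqOn_range (hs : ∀ g, Summable (fSeriesTerm u r g)) {g c : ℕ → ℕ}
    {m : ℕ} (hgc : ∀ i < m, g i = c i) :
    fSeries u r g = ∑ k ∈ range m, fSeriesTerm u r c k +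
      (∏ i ∈ range m, u (c i)) * fSeries u r (fun n => g (n + m)) := by
  have hprod : ∀ k ≤ m, ∏ i ∈ range k, u (g i) = ∏ i ∈ range k, u (c i) := fun k hk =>
    prod_congr rfl fun i hi => by rw [hgc i (by simp at hi; omega)]
  rw [fSeries_eq_sum_add_prod_mul hs g m, hprod m le_rfl, sum_congr rfl fun k hk => ?_]
  rw [mem_range] at hk
  rw [fSeriesTerm, fSeriesTerm, hgc k hk, hprod k hk.le]

theorem sum_range_fSeriesTerm (c : ℕ → ℕ) {m : ℕ} (hm : 1 ≤ m) :
    ∑ k ∈ range m, fSeriesTerm u r c k =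
      r (c 0) + ∑ k ∈ Ico 1 m, r (c k) * ∏ i ∈ range k, u (c i) := by
  rw [range_eq_Ico, sum_eq_sum_Ico_succ_bot hm]
  simp [fSeriesTerm]

theorem fSeries_const_zero (hs : ∀ g, Summable (fSeriesTerm u r g)) (hr0 : r 0 = 1 - u 0)
    (hu0 : u 0 ≠ 1) : fSeries u r (fun _ => 0) = 1 := by
  have h := fSeries_eq_sum_add_prod_mul hs (fun _ => 0) 1
  simp only [sum_range_one, prod_range_one, fSeriesTerm, prod_range_zero, mul_one, hr0] at h
  have hfix : (1 - u 0) * (fSeries u r (fun _ => 0) - 1) = 0 := by linarith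
  exact eq_of_sub_eq_zero ((mul_eq_zero.1 hfix).resolve_left (sub_ne_zero.2 hu0.symm))

def prefixThen (c : ℕ → ℕ) (m j : ℕ) : ℕ → ℕ :=
  fun n => if n < m then c n else if n = m then j else 0

theorem prefixThen_zero (c : ℕ → ℕ) (m : ℕ) :
    prefixThen c m 0 = fun n => if n < m then c n else 0 := by
  funext n
  simp only [prefixThen]
  split_ifs <;> rfl

theorem fSeries_prefixThen (hs : ∀ g, Summable (fSeriesTerm u r g)) (hr0 : r 0 = 1 - u 0)
    (hu0 : u 0 ≠ 1) (c : ℕ → ℕ) (m j : ℕ) :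
    fSeries u r (prefixThen c m j) = ∑ k ∈ range m, fSeriesTerm u r c k +
      (∏ i ∈ range m, u (c i)) * (r j + u j) := by
  rw [fSeries_eq_of_eqOn_range hs (g := prefixThen c m j) (c := c) (m := m)
      (fun i hi => if_pos hi),
    fSeries_eq_sum_add_prod_mul hs _ 1]
  simp [fSeries_const_zero hs hr0 hu0, fSeriesTerm, prefixThen]

theorem sum_fSeriesTerm_add_prod_mul_mem_Icc (hr : ∀ n, r n ∈ Set.Icc (0 : ℝ) 1)
    (hru : ∀ n, r n + u n ∈ Set.Icc (0 : ℝ) 1) (g : ℕ → ℕ) (m : ℕ) {t : ℝ}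
    (ht : t ∈ Set.Icc (0 : ℝ) 1) :
    ∑ k ∈ range m, fSeriesTerm u r g k + (∏ i ∈ range m, u (g i)) * t ∈
      Set.Icc (0 : ℝ) 1 := by
  induction m generalizing t with
  | zero => simpa using ht
  | succ m ih =>
    have hdigit : r (g m) + u (g m) * t ∈ Set.Icc (0 : ℝ) 1 := by
      obtain ⟨h1, h2⟩ := hr (g m); obtain ⟨h3, h4⟩ := hru (g m); obtain ⟨h5, h6⟩ := ht
      constructor <;> nlinarith
    convert ih hdigit using 1
    rw [sum_range_succ, prod_range_succ, fSeriesTerm]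
    ring

theorem fSeries_mem_Icc (hs : ∀ g, Summable (fSeriesTerm u r g))
    (hr : ∀ n, r n ∈ Set.Icc (0 : ℝ) 1) (hru : ∀ n, r n + u n ∈ Set.Icc (0 : ℝ) 1)
    (g : ℕ → ℕ) : fSeries u r g ∈ Set.Icc (0 : ℝ) 1 :=
  isClosed_Icc.mem_of_tendsto (hasSum_fSeriesTerm (hs g)).tendsto_sum_nat <|
    Eventually.of_forall fun m => by
      simpa using sum_fSeriesTerm_add_prod_mul_mem_Icc hr hru g m (t := 0) (by simp)

end fSeries

section tail

variable {u r : ℕ → ℝ} (hr : ∀ n, r n = 1 - ∑ i ∈ range (n + 1), u i)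
include hr

theorem tail_succ_add_succ (n : ℕ) : r (n + 1) + u (n + 1) = r n := by
  rw [hr, hr, sum_range_succ _ (n + 1)]
  ring

theorem tail_zero : r 0 = 1 - u 0 := by
  simp [hr]

theorem tail_add_mem_Icc (hr01 : ∀ n, r n ∈ Set.Icc (0 : ℝ) 1) (n : ℕ) :
    r n + u n ∈ Set.Icc (0 : ℝ) 1 := by
  cases n with
  | zero => simp [tail_zero hr]
  | succ n => exact tail_succ_add_succ hr n ▸ hr01 n

theorem tendsto_tail_add (hu : HasSum u 1) : Tendsto (fun n => r n + u n) atTop (𝓝 0) := by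
  have h := tendsto_const_nhds (x := (1 : ℝ)).sub hu.tendsto_sum_nat
  rw [sub_self] at h
  refine h.congr fun n => ?_
  rw [hr, sum_range_succ]
  ring

theorem fSeries_prefixThen_succ (hs : ∀ g, Summable (fSeriesTerm u r g)) (hu0 : u 0 ≠ 1)
    (c : ℕ → ℕ) (m : ℕ) :
    fSeries u r (prefixThen c m (c m + 1)) = ∑ k ∈ range (m + 1), fSeriesTerm u r c k := by
  rw [fSeries_prefixThen hs (tail_zero hr) hu0, tail_succ_add_succ hr, sum_range_succ,
    fSeriesTerm]
  ring

end tail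

theorem stmt9_general
    (u r : ℕ → ℝ)
    (hu_sum : HasSum u 1)
    (hu_abs : ∀ n, |u n| < 1)
    (hr : ∀ n, r n = 1 - ∑ i ∈ Finset.range (n + 1), u i)
    (hr01 : ∀ n, 0 < r n ∧ r n < 1)
    (G : ℝ → ℕ → ℕ)
    (hGuniq : ∀ x ∈ Set.Ioc (0:ℝ) 1, ∀ g : ℕ → ℕ, engelSum g = x → g = G x)
    (f : ℝ → ℝ)
    (hf : ∀ x ∈ Set.Ioc (0:ℝ) 1, f x = fSeries u r (G x))
    (m : ℕ) (hm : 1 ≤ m) (c : ℕ → ℕ)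
    (C : Set ℝ) (hC : C = {x | x ∈ Set.Ioc (0:ℝ) 1 ∧ ∀ i < m, G x i = c i})
    (bpt : ℝ) (hbpt : bpt = engelSum (fun n => if n < m then c n else 0))
    (apt : ℝ) (hapt : apt = engelSum
      (fun n => if n < m - 1 then c n else if n = m - 1 then c (m - 1) + 1 else 0))
    (y : ℝ) (hy : y = r (c 0) + ∑ k ∈ Finset.Ico 1 m,
      r (c k) * ∏ i ∈ Finset.range k, u (c i))
    (D : ℝ) (hD : D = ∏ i ∈ Finset.range m, u (c i)) :
    bpt ∈ C ∧ f bpt = y + D ∧ f apt = y ∧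
    (0 < D → IsGreatest (f '' C) (y + D) ∧ IsGLB (f '' C) y) ∧
    (D < 0 → IsLeast (f '' C) (y + D) ∧ IsLUB (f '' C) y) := by
  have hr_Icc (n : ℕ) : r n ∈ Set.Icc (0 : ℝ) 1 := Set.Ioo_subset_Icc_self (hr01 n)
  have hs := summable_fSeriesTerm hu_sum.summable.tendsto_atTop_zero hu_abs
    fun n => abs_le.2 ⟨by linarith [(hr01 n).1], (hr01 n).2.le⟩
  have hu0 : u 0 ≠ 1 := fun h => by simpa [h] using hu_abs 0
  have hG (g : ℕ → ℕ) : G (engelSum g) = g := (hGuniq _ (engelSum_mem_Ioc g) g rfl).symm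
  rw [← sum_range_fSeriesTerm c hm] at hy
  have hfC : f '' C ⊆ Set.uIcc y (y + D) := by
    rintro _ ⟨x, hxC, rfl⟩
    obtain ⟨hx, hxc⟩ := hC ▸ hxC
    rw [hf x hx, fSeries_eq_of_eqOn_range hs hxc, ← hy, ← hD]
    exact mem_uIcc_add_mul (fSeries_mem_Icc hs hr_Icc (tail_add_mem_Icc hr hr_Icc) _)
  have hprefix (j : ℕ) : engelSum (prefixThen c m j) ∈ C ∧
      f (engelSum (prefixThen c m j)) = y + D * (r j + u j) := by
    refine ⟨hC ▸ ⟨engelSum_mem_Ioc _, fun i hi => by rw [hG]; exact if_pos hi⟩, ?_⟩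
    rw [hf _ (engelSum_mem_Ioc _), hG, fSeries_prefixThen hs (tail_zero hr) hu0, hy, hD]
  have hbpt' : bpt = engelSum (prefixThen c m 0) := by rw [hbpt, prefixThen_zero]
  have hbC : bpt ∈ C := hbpt' ▸ (hprefix 0).1
  have hfbpt : f bpt = y + D := by rw [hbpt', (hprefix 0).2, tail_zero hr]; ring
  have hfapt : f apt = y := by
    obtain ⟨k, rfl⟩ : ∃ k, m = k + 1 := ⟨m - 1, by omega⟩
    rw [hapt, Nat.add_sub_cancel, hf _ (engelSum_mem_Ioc _), hG, hy]
    exact fSeries_prefixThen_succ hr hs hu0 c k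
  have hy_closure : y ∈ closure (f '' C) := by
    have hlim : Tendsto (fun j => y + D * (r j + u j)) atTop (𝓝 y) := by
      simpa using tendsto_const_nhds.add ((tendsto_tail_add hr hu_sum).const_mul D)
    exact mem_closure_of_tendsto hlim (Eventually.of_forall fun j =>
      (hprefix j).2 ▸ Set.mem_image_of_mem f (hprefix j).1)
  have hmem : y + D ∈ f '' C := hfbpt ▸ Set.mem_image_of_mem f hbC
  refine ⟨hbC, hfbpt, hfapt, fun hD0 => ?_, fun hD0 => ?_⟩
  · rw [Set.uIcc_of_le (by linarith)] at hfC
    exact isGreatest_and_isGLB_of_subset_Icc hfC hmem hy_closure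
  · rw [Set.uIcc_of_ge (by linarith)] at hfC
    exact isLeast_and_isLUB_of_subset_Icc hfC hmem hy_closure

/-- extrema of f on the cylinder Δ^E_{c₁…c_m}: if D_m > 0 the
supremum is y_m + D_m, attained at the right endpoint Δ^E_{c₁…c_m(0)}, and the
infimum is y_m, the value of f at the left endpoint Δ^E_{c₁…c_{m-1}[c_m+1](0)};
if D_m < 0 the roles are swapped. -/
theorem stmt9
    (u r : ℕ → ℝ)
    (hu_sum : HasSum u 1)
    (hu_abs : ∀ n, |u n| < 1)
    (hr : ∀ n, r n = 1 - ∑ i ∈ Finset.range (n + 1), u i)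
    (hr01 : ∀ n, 0 < r n ∧ r n < 1)
    (G : ℝ → ℕ → ℕ)
    (hG : ∀ x ∈ Set.Ioc (0:ℝ) 1, engelSum (G x) = x)
    (hGuniq : ∀ x ∈ Set.Ioc (0:ℝ) 1, ∀ g : ℕ → ℕ, engelSum g = x → g = G x)
    (f : ℝ → ℝ)
    (hf : ∀ x ∈ Set.Ioc (0:ℝ) 1, f x = fSeries u r (G x))
    (hf0 : f 0 = 0)
    (m : ℕ) (hm : 1 ≤ m) (c : ℕ → ℕ)
    (C : Set ℝ) (hC : C = {x | x ∈ Set.Ioc (0:ℝ) 1 ∧ ∀ i < m, G x i = c i})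
    (bpt : ℝ) (hbpt : bpt = engelSum (fun n => if n < m then c n else 0))
    (apt : ℝ) (hapt : apt = engelSum
      (fun n => if n < m - 1 then c n else if n = m - 1 then c (m - 1) + 1 else 0))
    (y : ℝ) (hy : y = r (c 0) + ∑ k ∈ Finset.Ico 1 m,
      r (c k) * ∏ i ∈ Finset.range k, u (c i))
    (D : ℝ) (hD : D = ∏ i ∈ Finset.range m, u (c i)) (hD0 : D ≠ 0) :
    bpt ∈ C ∧ f bpt = y + D ∧ f apt = y ∧
    (0 < D → IsGreatest (f '' C) (y + D) ∧ IsGLB (f '' C) y) ∧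
    (D < 0 → IsLeast (f '' C) (y + D) ∧ IsLUB (f '' C) y) :=
  stmt9_general u r hu_sum hu_abs hr hr01 G hGuniq f hf m hm c C hC bpt hbpt apt hapt y hy D hD
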